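/- arXiv:2310.09844 — 2 statements merged into one kernel-verified Lean document; each statement's English description precedes it below -/
import Mathlib

section
/- Lower bound. Fix ν ∈ ℕ and suppose δ, δ^ν ∈ (ε,∞] and: (a) the risk measure ℛ₀ is real-valued, monotone, and convex; (b) h^ν(F,G) = 0 whenever F and G are constant mappings; (c) there exist σ^ν, κ₀ ∈ [0,∞) such that for all (x,y) ∈ C one has |ψ₀(ξ,x,y) − ψ₀(ξ',x,y)| ≤ κ₀‖ξ − ξ'‖₂ for all ξ,ξ' ∈ Ξ and |ψ₀^ν(ξ,x,y) − ψ₀(ξ,x,y)| ≤ σ^ν for all ξ ∈ Ξ; (d) F + a ∈ ℱ for every F ∈ ℱ and a ∈ ℝ^n, G + b ∈ 𝒢 for every G ∈ 𝒢 and b ∈ ℝ^m, and both ℱ and 𝒢 contain their respective zero mappings. If 𝔪^ν is the infimum value of the training problem (TP)^ν without the risk constraints ℛ_k(·) ≤ 0, k = 1,...,q, then, as an inequality in the extended reals, 𝔪^ν − σ^ν − κ₀·diam Ξ ≤ inf_{(x,y)∈C} ψ₀(ξ,x,y) for every ξ ∈ Ξ. -/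
/-!
Every `(x, y) ∈ C` yields a feasible constant pair `F ≡ x`, `G ≡ b`, where `b` has coordinates
`±ε` chosen so that `Heav b = y`. Its regularizer vanishes, and since `ψ0ν (ξν ω) x y` exceeds
`ψ0 ξ x y` by at most `σν + κ0 * diam Ξ` (approximation, then Lipschitz continuity across `Ξ`),
monotonicity of `R0` bounds the training infimum by `ψ0 ξ x y + σν + κ0 * diam Ξ`.
-/

noncomputable def Heav {s : ℕ} (v : EuclideanSpace ℝ (Fin s)) : EuclideanSpace ℝ (Fin s) :=
  WithLp.toLp 2 (fun i => if v i ≤ 0 then (0 : ℝ) else 1)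

/-- The set `D_ε(δ) = ([−δ,−ε] ∪ [ε,δ])^m`, with `δ` possibly infinite. -/
def Dset (m : ℕ) (ε : ℝ) (δ : EReal) : Set (EuclideanSpace ℝ (Fin m)) :=
  {g | ∀ i, ε ≤ |g i| ∧ ((|g i| : ℝ) : EReal) ≤ δ}

noncomputable def binaryLift {m : ℕ} (ε : ℝ) (y : EuclideanSpace ℝ (Fin m)) :
    EuclideanSpace ℝ (Fin m) :=
  WithLp.toLp 2 (fun i => if y i = 0 then -ε else ε)

theorem Heav_binaryLift {m : ℕ} {ε : ℝ} (hε : 0 < ε) {y : EuclideanSpace ℝ (Fin m)}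
    (hy : ∀ i, y i = 0 ∨ y i = 1) : Heav (binaryLift ε y) = y := by
  ext i
  rcases hy i with h | h <;> simp [Heav, binaryLift, h, hε, hε.le]

theorem binaryLift_mem_Dset {m : ℕ} {ε : ℝ} (hε : 0 ≤ ε) {δ : EReal} (hδ : (ε : EReal) ≤ δ)
    (y : EuclideanSpace ℝ (Fin m)) : binaryLift ε y ∈ Dset m ε δ := by
  have habs : ∀ i, |binaryLift ε y i| = ε := fun i => by
    by_cases h : y i = 0 <;> simp [binaryLift, h, abs_of_nonneg hε]
  exact fun i => ⟨(habs i).ge, by rw [habs i]; exact hδ⟩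

theorem const_mem_of_forall_add_mem {α E : Type*} [AddZeroClass E] {S : Set (α → E)}
    (hadd : ∀ F ∈ S, ∀ a : E, (fun ζ => F ζ + a) ∈ S) (hzero : (fun _ => (0 : E)) ∈ S)
    (a : E) : (fun _ => a) ∈ S := by
  simpa using hadd _ hzero a

theorem le_add_diam_of_abs_sub_le_of_lipschitz {X : Type*} [PseudoMetricSpace X] {s : Set X}
    (hs : Bornology.IsBounded s) {f g : X → ℝ} {σ κ : ℝ} (hκ : 0 ≤ κ)
    (happrox : ∀ ξ ∈ s, |g ξ - f ξ| ≤ σ)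
    (hLip : ∀ ξ ∈ s, ∀ ξ' ∈ s, |f ξ - f ξ'| ≤ κ * dist ξ ξ')
    {ξ ξ' : X} (hξ : ξ ∈ s) (hξ' : ξ' ∈ s) :
    g ξ' ≤ f ξ + (σ + κ * Metric.diam s) := by
  have happrox' := (abs_le.mp (happrox ξ' hξ')).2
  have hLip' := (abs_le.mp (hLip ξ' hξ' ξ hξ)).2
  have hdiam : κ * dist ξ' ξ ≤ κ * Metric.diam s :=
    mul_le_mul_of_nonneg_left (Metric.dist_le_diam_of_mem hs hξ' hξ) hκ
  linarith

theorem EReal.sInf_sub_le_of_mem {S : Set EReal} {a c t : ℝ} (ha : (a : EReal) ∈ S)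
    (h : a ≤ t + c) : sInf S - c ≤ t := by
  calc sInf S - c ≤ ((t + c : ℝ) : EReal) - c :=
        EReal.sub_le_sub ((sInf_le ha).trans (EReal.coe_le_coe_iff.mpr h)) le_rfl
    _ = t := by rw [← EReal.coe_sub, _root_.add_sub_cancel_right]

theorem training_lower_bound_general
    {r n m : ℕ} {Ω : Type}
    (ψ0 ψ0ν : EuclideanSpace ℝ (Fin r) → EuclideanSpace ℝ (Fin n) →
      EuclideanSpace ℝ (Fin m) → ℝ)
    (C : Set (EuclideanSpace ℝ (Fin n) × EuclideanSpace ℝ (Fin m)))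
    (hCbin : ∀ p ∈ C, ∀ i, p.2 i = 0 ∨ p.2 i = 1)
    (Ξ : Set (EuclideanSpace ℝ (Fin r))) (hΞcomp : IsCompact Ξ)
    (ξν : Ω → EuclideanSpace ℝ (Fin r)) (hξν : ∀ ω, ξν ω ∈ Ξ)
    (ℱ : Set (EuclideanSpace ℝ (Fin r) → EuclideanSpace ℝ (Fin n)))
    (𝒢 : Set (EuclideanSpace ℝ (Fin r) → EuclideanSpace ℝ (Fin m)))
    -- (a) ℛ₀ real-valued, monotone, convex
    (R0 : (Ω → ℝ) → ℝ)
    (hR0const : ∀ c : ℝ, R0 (fun _ => c) = c)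
    (hR0mono : ∀ η η' : Ω → ℝ, (∀ ω, η ω ≤ η' ω) → R0 η ≤ R0 η')
    -- (b) regularizer vanishes on constant mappings
    (hν : (EuclideanSpace ℝ (Fin r) → EuclideanSpace ℝ (Fin n)) →
      (EuclideanSpace ℝ (Fin r) → EuclideanSpace ℝ (Fin m)) → ℝ)
    (hhν_const : ∀ F G, (∀ ζ ∈ Ξ, ∀ ζ' ∈ Ξ, F ζ = F ζ') →
      (∀ ζ ∈ Ξ, ∀ ζ' ∈ Ξ, G ζ = G ζ') → hν F G = 0)
    (ε : ℝ) (hε : 0 < ε)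
    (δν : EReal) (hδν : (ε : EReal) < δν)
    -- (c) Lipschitz and approximation bounds
    (σν κ0 : ℝ) (hκ0 : 0 ≤ κ0)
    (hLip : ∀ x y, (x, y) ∈ C → ∀ ξ ∈ Ξ, ∀ ξ' ∈ Ξ,
      |ψ0 ξ x y - ψ0 ξ' x y| ≤ κ0 * dist ξ ξ')
    (happrox : ∀ x y, (x, y) ∈ C → ∀ ξ ∈ Ξ, |ψ0ν ξ x y - ψ0 ξ x y| ≤ σν)
    -- (d) translation closure and zero mappings
    (hshiftF : ∀ F ∈ ℱ, ∀ a : EuclideanSpace ℝ (Fin n), (fun ζ => F ζ + a) ∈ ℱ)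
    (hshiftG : ∀ G ∈ 𝒢, ∀ b : EuclideanSpace ℝ (Fin m), (fun ζ => G ζ + b) ∈ 𝒢)
    (hzeroF : (fun _ => (0 : EuclideanSpace ℝ (Fin n))) ∈ ℱ)
    (hzeroG : (fun _ => (0 : EuclideanSpace ℝ (Fin m))) ∈ 𝒢) :
    ∀ ξ ∈ Ξ,
      sInf {v : EReal | ∃ F ∈ ℱ, ∃ G ∈ 𝒢,
          (∀ ω, (F (ξν ω), Heav (G (ξν ω))) ∈ C) ∧
          (∀ ω, G (ξν ω) ∈ Dset m ε δν) ∧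
          v = ((R0 (fun ω => ψ0ν (ξν ω) (F (ξν ω)) (Heav (G (ξν ω)))) + hν F G : ℝ) : EReal)}
        - ((σν + κ0 * Metric.diam Ξ : ℝ) : EReal) ≤
      sInf {v : EReal | ∃ x y, (x, y) ∈ C ∧ v = ((ψ0 ξ x y : ℝ) : EReal)} := by
  intro ξ hξ
  refine le_sInf ?_
  rintro _ ⟨x, y, hxy, rfl⟩
  have hHeav : Heav (binaryLift ε y) = y := Heav_binaryLift hε (hCbin _ hxy)
  refine EReal.sInf_sub_le_of_mem (a := R0 fun ω => ψ0ν (ξν ω) x y) ⟨fun _ => x,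
    const_mem_of_forall_add_mem hshiftF hzeroF x, fun _ => binaryLift ε y,
    const_mem_of_forall_add_mem hshiftG hzeroG _, fun _ => by simpa only [hHeav] using hxy,
    fun _ => binaryLift_mem_Dset hε.le hδν.le y, ?_⟩ ?_
  · rw [hhν_const (fun _ => x) (fun _ => binaryLift ε y) (fun _ _ _ _ => rfl)
      (fun _ _ _ _ => rfl), add_zero]
    simp only [hHeav]
  · calc R0 (fun ω => ψ0ν (ξν ω) x y)
        ≤ R0 fun _ => ψ0 ξ x y + (σν + κ0 * Metric.diam Ξ) :=
          hR0mono _ _ fun ω => le_add_diam_of_abs_sub_le_of_lipschitz hΞcomp.isBounded hκ0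
            (happrox x y hxy) (hLip x y hxy) hξ (hξν ω)
      _ = _ := hR0const _

/-- Lower bound.  The infimum value `𝔪^ν` of the training problem `(TP)^ν`
without risk constraints satisfies `𝔪^ν − σ^ν − κ₀·diam Ξ ≤ inf_{(x,y)∈C} ψ₀(ξ,x,y)` for
every `ξ ∈ Ξ`, as an inequality in the extended reals. -/
theorem training_lower_bound
    {r n m : ℕ} {Ω : Type} [Fintype Ω] [Nonempty Ω]
    (P : Ω → ℝ) (hP : ∀ ω, 0 < P ω) (hPsum : ∑ ω, P ω = 1)
    (ψ0 ψ0ν : EuclideanSpace ℝ (Fin r) → EuclideanSpace ℝ (Fin n) →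
      EuclideanSpace ℝ (Fin m) → ℝ)
    (hψ0cont : Continuous fun p : EuclideanSpace ℝ (Fin r) × EuclideanSpace ℝ (Fin n) ×
      EuclideanSpace ℝ (Fin m) => ψ0 p.1 p.2.1 p.2.2)
    (hψ0νcont : Continuous fun p : EuclideanSpace ℝ (Fin r) × EuclideanSpace ℝ (Fin n) ×
      EuclideanSpace ℝ (Fin m) => ψ0ν p.1 p.2.1 p.2.2)
    (C : Set (EuclideanSpace ℝ (Fin n) × EuclideanSpace ℝ (Fin m)))
    (hCne : C.Nonempty) (hCcl : IsClosed C)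
    (hCbin : ∀ p ∈ C, ∀ i, p.2 i = 0 ∨ p.2 i = 1)
    (Ξ : Set (EuclideanSpace ℝ (Fin r))) (hΞcomp : IsCompact Ξ)
    (ξν : Ω → EuclideanSpace ℝ (Fin r)) (hξν : ∀ ω, ξν ω ∈ Ξ)
    (ℱ : Set (EuclideanSpace ℝ (Fin r) → EuclideanSpace ℝ (Fin n)))
    (𝒢 : Set (EuclideanSpace ℝ (Fin r) → EuclideanSpace ℝ (Fin m)))
    (hℱcont : ∀ F ∈ ℱ, ContinuousOn F Ξ) (h𝒢cont : ∀ G ∈ 𝒢, ContinuousOn G Ξ)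
    -- (a) ℛ₀ real-valued, monotone, convex
    (R0 : (Ω → ℝ) → ℝ)
    (hR0const : ∀ c : ℝ, R0 (fun _ => c) = c)
    (hR0mono : ∀ η η' : Ω → ℝ, (∀ ω, η ω ≤ η' ω) → R0 η ≤ R0 η')
    (hR0convex : ∀ l : ℝ, 0 ≤ l → l ≤ 1 → ∀ η η' : Ω → ℝ,
      R0 (fun ω => (1 - l) * η ω + l * η' ω) ≤ (1 - l) * R0 η + l * R0 η')
    -- (b) regularizer vanishes on constant mappings
    (hν : (EuclideanSpace ℝ (Fin r) → EuclideanSpace ℝ (Fin n)) →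
      (EuclideanSpace ℝ (Fin r) → EuclideanSpace ℝ (Fin m)) → ℝ)
    (hhν_nonneg : ∀ F G, 0 ≤ hν F G)
    (hhν_const : ∀ F G, (∀ ζ ∈ Ξ, ∀ ζ' ∈ Ξ, F ζ = F ζ') →
      (∀ ζ ∈ Ξ, ∀ ζ' ∈ Ξ, G ζ = G ζ') → hν F G = 0)
    (ε : ℝ) (hε : 0 < ε)
    (δ δν : EReal) (hδ : (ε : EReal) < δ) (hδν : (ε : EReal) < δν)
    -- (c) Lipschitz and approximation bounds
    (σν κ0 : ℝ) (hσν : 0 ≤ σν) (hκ0 : 0 ≤ κ0)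
    (hLip : ∀ x y, (x, y) ∈ C → ∀ ξ ∈ Ξ, ∀ ξ' ∈ Ξ,
      |ψ0 ξ x y - ψ0 ξ' x y| ≤ κ0 * dist ξ ξ')
    (happrox : ∀ x y, (x, y) ∈ C → ∀ ξ ∈ Ξ, |ψ0ν ξ x y - ψ0 ξ x y| ≤ σν)
    -- (d) translation closure and zero mappings
    (hshiftF : ∀ F ∈ ℱ, ∀ a : EuclideanSpace ℝ (Fin n), (fun ζ => F ζ + a) ∈ ℱ)
    (hshiftG : ∀ G ∈ 𝒢, ∀ b : EuclideanSpace ℝ (Fin m), (fun ζ => G ζ + b) ∈ 𝒢)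
    (hzeroF : (fun _ => (0 : EuclideanSpace ℝ (Fin n))) ∈ ℱ)
    (hzeroG : (fun _ => (0 : EuclideanSpace ℝ (Fin m))) ∈ 𝒢) :
    ∀ ξ ∈ Ξ,
      sInf {v : EReal | ∃ F ∈ ℱ, ∃ G ∈ 𝒢,
          (∀ ω, (F (ξν ω), Heav (G (ξν ω))) ∈ C) ∧
          (∀ ω, G (ξν ω) ∈ Dset m ε δν) ∧
          v = ((R0 (fun ω => ψ0ν (ξν ω) (F (ξν ω)) (Heav (G (ξν ω)))) + hν F G : ℝ) : EReal)}
        - ((σν + κ0 * Metric.diam Ξ : ℝ) : EReal) ≤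
      sInf {v : EReal | ∃ x y, (x, y) ∈ C ∧ v = ((ψ0 ξ x y : ℝ) : EReal)} :=
  training_lower_bound_general ψ0 ψ0ν C hCbin Ξ hΞcomp ξν hξν ℱ 𝒢 R0 hR0const hR0mono hν hhν_const ε
    hε δν hδν σν κ0 hκ0 hLip happrox hshiftF hshiftG hzeroF hzeroG
end

section
/- Decision rule guarantee for direct use of a trained rule. Fix ν ∈ ℕ, suppose δ, δ^ν ∈ (ε,∞], τ^ν ∈ [0,∞), (F^ν,G^ν) is a τ^ν-minimizer of the training problem (TP)^ν without the risk constraints, and the following hold: (a) ℛ₀ is real-valued, monotone, and convex; (b) h^ν(F,G) = 0 whenever F and G are constant mappings; (c) there exist σ^ν, κ₀ ∈ [0,∞) with |ψ₀(ξ,x,y) − ψ₀(ξ',x,y)| ≤ κ₀‖ξ − ξ'‖₂ and |ψ₀^ν(ξ,x,y) − ψ₀(ξ,x,y)| ≤ σ^ν for all ξ,ξ' ∈ Ξ and (x,y) ∈ C; (d) ℱ and 𝒢 are closed under addition of constants and contain their zero mappings. Suppose further λ, κ₀' ∈ [0,∞) satisfy ‖F^ν(ξ'') − F^ν(ξ')‖₂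 ≤ λ‖ξ'' − ξ'‖₂ for all ξ'',ξ' ∈ Ξ, and |ψ₀(ξ'',x'',y) − ψ₀(ξ',x',y)| ≤ κ₀'·√(‖ξ''−ξ'‖₂² + ‖x''−x'‖₂²) for all ξ'',ξ' ∈ Ξ and (x'',y),(x',y) ∈ C. Then for every ξ ∈ Ξ such that (F^ν(ξ), ℍ(G^ν(ξ))) ∈ C and ℍ(G^ν(ξ)) = ℍ(G^ν(ξ^ν(ω))) for all ω ∈ Ω, one has: the infimum inf_{(x,y)∈C} ψ₀(ξ,x,y) is finite and ψ₀(ξ, F^ν(ξ), ℍ(G^ν(ξ))) ≤ inf_{(x,y)∈C} ψ₀(ξ,x,y) + 2σ^ν + τ^ν + (κ₀ + κ₀'·√(1+λ²))·diam Ξ. -/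
open Real

theorem sqrt_sq_add_sq_le_mul {d e lam : ℝ} (hd : 0 ≤ d) (he : 0 ≤ e) (hed : e ≤ lam * d) :
    √(d ^ 2 + e ^ 2) ≤ √(1 + lam ^ 2) * d := by
  calc √(d ^ 2 + e ^ 2) ≤ √((1 + lam ^ 2) * d ^ 2) := sqrt_le_sqrt (by nlinarith)
    _ = √(1 + lam ^ 2) * d := by rw [sqrt_mul (by positivity), sqrt_sq hd]

theorem const_mem_of_add_const_mem {X M : Type*} [AddZeroClass M] {S : Set (X → M)}
    (hzero : (fun _ => 0) ∈ S) (hshift : ∀ F ∈ S, ∀ a : M, (fun ζ => F ζ + a) ∈ S) (a : M) :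
    (fun _ => a) ∈ S := by
  simpa using hshift _ hzero a

section Risk

variable {Ω : Type*} {R : (Ω → ℝ) → ℝ}

theorem const_le_risk (hconst : ∀ c : ℝ, R (fun _ => c) = c)
    (hmono : ∀ η η' : Ω → ℝ, (∀ ω, η ω ≤ η' ω) → R η ≤ R η') {η : Ω → ℝ} {c : ℝ}
    (h : ∀ ω, c ≤ η ω) : c ≤ R η :=
  hconst c ▸ hmono _ _ h

theorem risk_le_const (hconst : ∀ c : ℝ, R (fun _ => c) = c)
    (hmono : ∀ η η' : Ω → ℝ, (∀ ω, η ω ≤ η' ω) → R η ≤ R η') {η : Ω → ℝ} {c : ℝ}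
    (h : ∀ ω, η ω ≤ c) : R η ≤ c :=
  hconst c ▸ hmono _ _ h

end Risk

noncomputable def signLift {m : ℕ} (ε : ℝ) (y : EuclideanSpace ℝ (Fin m)) :
    EuclideanSpace ℝ (Fin m) :=
  WithLp.toLp 2 (fun i => if y i = 0 then -ε else ε)

section SignLift

variable {m : ℕ} {ε : ℝ} {y : EuclideanSpace ℝ (Fin m)}

theorem Heav_signLift (hε : 0 < ε) (hy : ∀ i, y i = 0 ∨ y i = 1) : Heav (signLift ε y) = y := by
  ext i
  rcases hy i with h | h <;> simp [Heav, signLift, h, hε, hε.le]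

theorem signLift_mem_Dset {δ : EReal} (hε : 0 ≤ ε) (hδ : (ε : EReal) ≤ δ) :
    signLift ε y ∈ Dset m ε δ := by
  intro i
  have habs : |signLift ε y i| = ε := by
    by_cases h : y i = 0 <;> simp [signLift, h, abs_of_nonneg hε]
  rw [habs]
  exact ⟨le_rfl, hδ⟩

end SignLift

theorem bddBelow_and_le_csInf_add {S : Set ℝ} {a c : ℝ} (hS : S.Nonempty)
    (h : ∀ v ∈ S, a ≤ v + c) : BddBelow S ∧ a ≤ sInf S + c := by
  have hlb : ∀ v ∈ S, a - c ≤ v := fun v hv => by linarith [h v hv]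
  exact ⟨⟨a - c, hlb⟩, by linarith [le_csInf hS hlb]⟩

theorem trained_risk_le_constant_rule {Ω X Y : Type*} {m : ℕ} {R : (Ω → ℝ) → ℝ}
    {ψ : X → Y → EuclideanSpace ℝ (Fin m) → ℝ} {C : Set (Y × EuclideanSpace ℝ (Fin m))}
    {ξν : Ω → X} {ℱ : Set (X → Y)} {𝒢 : Set (X → EuclideanSpace ℝ (Fin m))}
    {h : (X → Y) → (X → EuclideanSpace ℝ (Fin m)) → ℝ} {ε τ : ℝ} {δ : EReal}
    {F₀ : X → Y} {G₀ : X → EuclideanSpace ℝ (Fin m)} (hε : 0 < ε) (hδ : (ε : EReal) ≤ δ)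
    (hℱ : ∀ a, (fun _ => a) ∈ ℱ) (h𝒢 : ∀ b, (fun _ => b) ∈ 𝒢) (hh₀ : 0 ≤ h F₀ G₀)
    (hh_const : ∀ a b, h (fun _ => a) (fun _ => b) = 0)
    (hmin : ∀ F ∈ ℱ, ∀ G ∈ 𝒢, (∀ ω, (F (ξν ω), Heav (G (ξν ω))) ∈ C) →
      (∀ ω, G (ξν ω) ∈ Dset m ε δ) →
      R (fun ω => ψ (ξν ω) (F₀ (ξν ω)) (Heav (G₀ (ξν ω)))) + h F₀ G₀ ≤
        R (fun ω => ψ (ξν ω) (F (ξν ω)) (Heav (G (ξν ω)))) + h F G + τ)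
    {x : Y} {y : EuclideanSpace ℝ (Fin m)} (hxy : (x, y) ∈ C) (hy : ∀ i, y i = 0 ∨ y i = 1) :
    R (fun ω => ψ (ξν ω) (F₀ (ξν ω)) (Heav (G₀ (ξν ω)))) ≤ R (fun ω => ψ (ξν ω) x y) + τ := by
  have hmin_const := hmin _ (hℱ x) _ (h𝒢 (signLift ε y))
    (fun _ => by rwa [Heav_signLift hε hy]) (fun _ => signLift_mem_Dset hε.le hδ)
  rw [Heav_signLift hε hy, hh_const] at hmin_const
  linarith

theorem direct_rule_guarantee_general
    {r n m : ℕ} {Ω : Type}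
    (ψ0 ψ0ν : EuclideanSpace ℝ (Fin r) → EuclideanSpace ℝ (Fin n) →
      EuclideanSpace ℝ (Fin m) → ℝ)
    (C : Set (EuclideanSpace ℝ (Fin n) × EuclideanSpace ℝ (Fin m)))
    (hCne : C.Nonempty)
    (hCbin : ∀ p ∈ C, ∀ i, p.2 i = 0 ∨ p.2 i = 1)
    (Ξ : Set (EuclideanSpace ℝ (Fin r))) (hΞcomp : IsCompact Ξ)
    (ξν : Ω → EuclideanSpace ℝ (Fin r)) (hξν : ∀ ω, ξν ω ∈ Ξ)
    (ℱ : Set (EuclideanSpace ℝ (Fin r) → EuclideanSpace ℝ (Fin n)))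
    (𝒢 : Set (EuclideanSpace ℝ (Fin r) → EuclideanSpace ℝ (Fin m)))
    -- (a) ℛ₀ real-valued, monotone, convex
    (R0 : (Ω → ℝ) → ℝ)
    (hR0const : ∀ c : ℝ, R0 (fun _ => c) = c)
    (hR0mono : ∀ η η' : Ω → ℝ, (∀ ω, η ω ≤ η' ω) → R0 η ≤ R0 η')
    -- (b) regularizer vanishes on constant mappings
    (hν : (EuclideanSpace ℝ (Fin r) → EuclideanSpace ℝ (Fin n)) →
      (EuclideanSpace ℝ (Fin r) → EuclideanSpace ℝ (Fin m)) → ℝ)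
    (hhν_nonneg : ∀ F G, 0 ≤ hν F G)
    (hhν_const : ∀ F G, (∀ ζ ∈ Ξ, ∀ ζ' ∈ Ξ, F ζ = F ζ') →
      (∀ ζ ∈ Ξ, ∀ ζ' ∈ Ξ, G ζ = G ζ') → hν F G = 0)
    (ε : ℝ) (hε : 0 < ε)
    (δν : EReal) (hδν : (ε : EReal) < δν)
    -- (c) Lipschitz and approximation bounds
    (σν κ0 : ℝ) (hκ0 : 0 ≤ κ0)
    (hLip : ∀ x y, (x, y) ∈ C → ∀ ξ ∈ Ξ, ∀ ξ' ∈ Ξ,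
      |ψ0 ξ x y - ψ0 ξ' x y| ≤ κ0 * dist ξ ξ')
    (happrox : ∀ x y, (x, y) ∈ C → ∀ ξ ∈ Ξ, |ψ0ν ξ x y - ψ0 ξ x y| ≤ σν)
    -- (d) translation closure and zero mappings
    (hshiftF : ∀ F ∈ ℱ, ∀ a : EuclideanSpace ℝ (Fin n), (fun ζ => F ζ + a) ∈ ℱ)
    (hshiftG : ∀ G ∈ 𝒢, ∀ b : EuclideanSpace ℝ (Fin m), (fun ζ => G ζ + b) ∈ 𝒢)
    (hzeroF : (fun _ => (0 : EuclideanSpace ℝ (Fin n))) ∈ ℱ)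
    (hzeroG : (fun _ => (0 : EuclideanSpace ℝ (Fin m))) ∈ 𝒢)
    -- (F^ν,G^ν) is a τ^ν-minimizer of (TP)^ν without risk constraints
    (τν : ℝ)
    (Fν : EuclideanSpace ℝ (Fin r) → EuclideanSpace ℝ (Fin n))
    (Gν : EuclideanSpace ℝ (Fin r) → EuclideanSpace ℝ (Fin m))
    (hνC : ∀ ω, (Fν (ξν ω), Heav (Gν (ξν ω))) ∈ C)
    (hnearmin : ∀ F ∈ ℱ, ∀ G ∈ 𝒢,
      (∀ ω, (F (ξν ω), Heav (G (ξν ω))) ∈ C) →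
      (∀ ω, G (ξν ω) ∈ Dset m ε δν) →
      R0 (fun ω => ψ0ν (ξν ω) (Fν (ξν ω)) (Heav (Gν (ξν ω)))) + hν Fν Gν ≤
        R0 (fun ω => ψ0ν (ξν ω) (F (ξν ω)) (Heav (G (ξν ω)))) + hν F G + τν)
    -- additional Lipschitz data for F^ν and ψ₀
    (lam κ0' : ℝ) (hκ0' : 0 ≤ κ0')
    (hFνlip : ∀ ξ'' ∈ Ξ, ∀ ξ' ∈ Ξ, dist (Fν ξ'') (Fν ξ') ≤ lam * dist ξ'' ξ')
    (hψ0lip : ∀ ξ'' ∈ Ξ, ∀ ξ' ∈ Ξ, ∀ x'' x' y, (x'', y) ∈ C → (x', y) ∈ C →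
      |ψ0 ξ'' x'' y - ψ0 ξ' x' y| ≤ κ0' * Real.sqrt (dist ξ'' ξ' ^ 2 + dist x'' x' ^ 2)) :
    ∀ ξ ∈ Ξ, (Fν ξ, Heav (Gν ξ)) ∈ C → (∀ ω, Heav (Gν ξ) = Heav (Gν (ξν ω))) →
      BddBelow {v : ℝ | ∃ x y, (x, y) ∈ C ∧ v = ψ0 ξ x y} ∧
      ψ0 ξ (Fν ξ) (Heav (Gν ξ)) ≤
        sInf {v : ℝ | ∃ x y, (x, y) ∈ C ∧ v = ψ0 ξ x y} +
          (2 * σν + τν + (κ0 + κ0' * Real.sqrt (1 + lam ^ 2)) * Metric.diam Ξ) := by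
  intro ξ hξ hξC hHeq
  obtain ⟨p₀, hp₀⟩ := hCne
  refine bddBelow_and_le_csInf_add ⟨_, p₀.1, p₀.2, hp₀, rfl⟩ ?_
  rintro _ ⟨x, y, hxy, rfl⟩
  have hdiam : ∀ ω, dist ξ (ξν ω) ≤ Metric.diam Ξ := fun ω =>
    Metric.dist_le_diam_of_mem hΞcomp.isBounded hξ (hξν ω)
  have htrained : ∀ ω, ψ0 ξ (Fν ξ) (Heav (Gν ξ)) - σν - κ0' * √(1 + lam ^ 2) * Metric.diam Ξ ≤
      ψ0ν (ξν ω) (Fν (ξν ω)) (Heav (Gν (ξν ω))) := fun ω => by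
    have hC : (Fν (ξν ω), Heav (Gν ξ)) ∈ C := by rw [hHeq ω]; exact hνC ω
    have hmove := (hψ0lip ξ hξ _ (hξν ω) _ _ _ hξC hC).trans <| mul_le_mul_of_nonneg_left
      (sqrt_sq_add_sq_le_mul dist_nonneg dist_nonneg (hFνlip ξ hξ _ (hξν ω))) hκ0'
    have := mul_le_mul_of_nonneg_left (hdiam ω) (mul_nonneg hκ0' (sqrt_nonneg (1 + lam ^ 2)))
    rw [hHeq ω] at hmove ⊢
    linarith [(abs_le.1 hmove).2, (abs_le.1 (happrox _ _ (hνC ω) _ (hξν ω))).1]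
  have hconst : ∀ ω, ψ0ν (ξν ω) x y ≤ ψ0 ξ x y + σν + κ0 * Metric.diam Ξ := fun ω => by
    have := mul_le_mul_of_nonneg_left (dist_comm ξ (ξν ω) ▸ hdiam ω) hκ0
    linarith [(abs_le.1 (hLip x y hxy _ (hξν ω) ξ hξ)).2, (abs_le.1 (happrox x y hxy _ (hξν ω))).2]
  have hcompare := trained_risk_le_constant_rule hε hδν.le
    (const_mem_of_add_const_mem hzeroF hshiftF) (const_mem_of_add_const_mem hzeroG hshiftG)
    (hhν_nonneg Fν Gν) (fun _ _ => hhν_const _ _ (fun _ _ _ _ => rfl) (fun _ _ _ _ => rfl))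
    hnearmin hxy (hCbin _ hxy)
  have := const_le_risk hR0const hR0mono htrained
  have := risk_le_const hR0const hR0mono hconst
  linarith

/-- Decision rule guarantee for direct use of a trained rule `(F^ν,G^ν)`:
at every `ξ ∈ Ξ` where the prescribed decision lies in `C` and the binary prescription
agrees with the one at every training point, the decision is
`(2σ^ν + τ^ν + (κ₀ + κ₀'·√(1+λ²))·diam Ξ)`-suboptimal. -/
theorem direct_rule_guarantee
    {r n m : ℕ} {Ω : Type} [Fintype Ω] [Nonempty Ω]
    (P : Ω → ℝ) (hP : ∀ ω, 0 < P ω) (hPsum : ∑ ω, P ω = 1)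
    (ψ0 ψ0ν : EuclideanSpace ℝ (Fin r) → EuclideanSpace ℝ (Fin n) →
      EuclideanSpace ℝ (Fin m) → ℝ)
    (hψ0cont : Continuous fun p : EuclideanSpace ℝ (Fin r) × EuclideanSpace ℝ (Fin n) ×
      EuclideanSpace ℝ (Fin m) => ψ0 p.1 p.2.1 p.2.2)
    (hψ0νcont : Continuous fun p : EuclideanSpace ℝ (Fin r) × EuclideanSpace ℝ (Fin n) ×
      EuclideanSpace ℝ (Fin m) => ψ0ν p.1 p.2.1 p.2.2)
    (C : Set (EuclideanSpace ℝ (Fin n) × EuclideanSpace ℝ (Fin m)))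
    (hCne : C.Nonempty) (hCcl : IsClosed C)
    (hCbin : ∀ p ∈ C, ∀ i, p.2 i = 0 ∨ p.2 i = 1)
    (Ξ : Set (EuclideanSpace ℝ (Fin r))) (hΞcomp : IsCompact Ξ)
    (ξν : Ω → EuclideanSpace ℝ (Fin r)) (hξν : ∀ ω, ξν ω ∈ Ξ)
    (ℱ : Set (EuclideanSpace ℝ (Fin r) → EuclideanSpace ℝ (Fin n)))
    (𝒢 : Set (EuclideanSpace ℝ (Fin r) → EuclideanSpace ℝ (Fin m)))
    (hℱcont : ∀ F ∈ ℱ, ContinuousOn F Ξ) (h𝒢cont : ∀ G ∈ 𝒢, ContinuousOn G Ξ)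
    -- (a) ℛ₀ real-valued, monotone, convex
    (R0 : (Ω → ℝ) → ℝ)
    (hR0const : ∀ c : ℝ, R0 (fun _ => c) = c)
    (hR0mono : ∀ η η' : Ω → ℝ, (∀ ω, η ω ≤ η' ω) → R0 η ≤ R0 η')
    (hR0convex : ∀ l : ℝ, 0 ≤ l → l ≤ 1 → ∀ η η' : Ω → ℝ,
      R0 (fun ω => (1 - l) * η ω + l * η' ω) ≤ (1 - l) * R0 η + l * R0 η')
    -- (b) regularizer vanishes on constant mappings
    (hν : (EuclideanSpace ℝ (Fin r) → EuclideanSpace ℝ (Fin n)) →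
      (EuclideanSpace ℝ (Fin r) → EuclideanSpace ℝ (Fin m)) → ℝ)
    (hhν_nonneg : ∀ F G, 0 ≤ hν F G)
    (hhν_const : ∀ F G, (∀ ζ ∈ Ξ, ∀ ζ' ∈ Ξ, F ζ = F ζ') →
      (∀ ζ ∈ Ξ, ∀ ζ' ∈ Ξ, G ζ = G ζ') → hν F G = 0)
    (ε : ℝ) (hε : 0 < ε)
    (δ δν : EReal) (hδ : (ε : EReal) < δ) (hδν : (ε : EReal) < δν)
    -- (c) Lipschitz and approximation bounds
    (σν κ0 : ℝ) (hσν : 0 ≤ σν) (hκ0 : 0 ≤ κ0)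
    (hLip : ∀ x y, (x, y) ∈ C → ∀ ξ ∈ Ξ, ∀ ξ' ∈ Ξ,
      |ψ0 ξ x y - ψ0 ξ' x y| ≤ κ0 * dist ξ ξ')
    (happrox : ∀ x y, (x, y) ∈ C → ∀ ξ ∈ Ξ, |ψ0ν ξ x y - ψ0 ξ x y| ≤ σν)
    -- (d) translation closure and zero mappings
    (hshiftF : ∀ F ∈ ℱ, ∀ a : EuclideanSpace ℝ (Fin n), (fun ζ => F ζ + a) ∈ ℱ)
    (hshiftG : ∀ G ∈ 𝒢, ∀ b : EuclideanSpace ℝ (Fin m), (fun ζ => G ζ + b) ∈ 𝒢)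
    (hzeroF : (fun _ => (0 : EuclideanSpace ℝ (Fin n))) ∈ ℱ)
    (hzeroG : (fun _ => (0 : EuclideanSpace ℝ (Fin m))) ∈ 𝒢)
    -- (F^ν,G^ν) is a τ^ν-minimizer of (TP)^ν without risk constraints
    (τν : ℝ) (hτν : 0 ≤ τν)
    (Fν : EuclideanSpace ℝ (Fin r) → EuclideanSpace ℝ (Fin n))
    (Gν : EuclideanSpace ℝ (Fin r) → EuclideanSpace ℝ (Fin m))
    (hFνmem : Fν ∈ ℱ) (hGνmem : Gν ∈ 𝒢)
    (hνC : ∀ ω, (Fν (ξν ω), Heav (Gν (ξν ω))) ∈ C)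
    (hνD : ∀ ω, Gν (ξν ω) ∈ Dset m ε δν)
    (hnearmin : ∀ F ∈ ℱ, ∀ G ∈ 𝒢,
      (∀ ω, (F (ξν ω), Heav (G (ξν ω))) ∈ C) →
      (∀ ω, G (ξν ω) ∈ Dset m ε δν) →
      R0 (fun ω => ψ0ν (ξν ω) (Fν (ξν ω)) (Heav (Gν (ξν ω)))) + hν Fν Gν ≤
        R0 (fun ω => ψ0ν (ξν ω) (F (ξν ω)) (Heav (G (ξν ω)))) + hν F G + τν)
    -- additional Lipschitz data for F^ν and ψ₀
    (lam κ0' : ℝ) (hlam : 0 ≤ lam) (hκ0' : 0 ≤ κ0')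
    (hFνlip : ∀ ξ'' ∈ Ξ, ∀ ξ' ∈ Ξ, dist (Fν ξ'') (Fν ξ') ≤ lam * dist ξ'' ξ')
    (hψ0lip : ∀ ξ'' ∈ Ξ, ∀ ξ' ∈ Ξ, ∀ x'' x' y, (x'', y) ∈ C → (x', y) ∈ C →
      |ψ0 ξ'' x'' y - ψ0 ξ' x' y| ≤ κ0' * Real.sqrt (dist ξ'' ξ' ^ 2 + dist x'' x' ^ 2)) :
    ∀ ξ ∈ Ξ, (Fν ξ, Heav (Gν ξ)) ∈ C → (∀ ω, Heav (Gν ξ) = Heav (Gν (ξν ω))) →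
      BddBelow {v : ℝ | ∃ x y, (x, y) ∈ C ∧ v = ψ0 ξ x y} ∧
      ψ0 ξ (Fν ξ) (Heav (Gν ξ)) ≤
        sInf {v : ℝ | ∃ x y, (x, y) ∈ C ∧ v = ψ0 ξ x y} +
          (2 * σν + τν + (κ0 + κ0' * Real.sqrt (1 + lam ^ 2)) * Metric.diam Ξ) :=
  direct_rule_guarantee_general ψ0 ψ0ν C hCne hCbin Ξ hΞcomp ξν hξν ℱ 𝒢 R0 hR0const hR0mono hν
    hhν_nonneg hhν_const ε hε δν hδν σν κ0 hκ0 hLip happrox hshiftF hshiftG hzeroF hzeroG τν Fν Gν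
    hνC hnearmin lam κ0' hκ0' hFνlip hψ0lip
end
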